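/- The mean LCS function is concave: for all p, q ∈ (−1,1), γ_k((p+q)/2) ≥ (γ_k(p) + γ_k(q))/2, where γ_k(p) := lim_{n→∞} E|LCS(X_1…X_{n−np}; Y_1…Y_{n+np})|/n (the limit existing by superadditivity). -/

import Mathlib

/-!
Concatenating common subsequences shows that `lcsLen` is superadditive under appending words.
Since the letters are i.i.d., a pair of windows of the two sequences has the same joint law
wherever it is placed, so `e a b := expLCS … a b` is superadditive (and nonnegative, hence
monotone). With `r = (p + q) / 2`, the windows of lengths `⌊n(1 ∓ p)⌋₊` and `⌊n(1 ∓ q)⌋₊` fit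
side by side into windows of lengths `⌊2n(1 ∓ r)⌋₊`, so the value of `e` at the former two
sums to at most its value at the latter; dividing by `2n` and letting `n → ∞` gives the
midpoint concavity of the limit.
-/
open MeasureTheory ProbabilityTheory Filter

noncomputable def lcsLen {α : Type*} (x y : List α) : ℕ :=
  sSup {n | ∃ z : List α, z.length = n ∧ z.Sublist x ∧ z.Sublist y}

noncomputable def expLCS {Ω : Type*} [MeasurableSpace Ω] (μ : MeasureTheory.Measure Ω) {k : ℕ}
    (X Y : ℕ → Ω → Fin k) (a b : ℕ) : ℝ :=
  ∫ ω, (lcsLen (List.ofFn fun i : Fin a => X i ω) (List.ofFn fun j : Fin b => Y j ω) : ℝ) ∂μ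

section LCS

variable {α : Type*}

lemma bddAbove_commonSublist_lengths (x y : List α) :
    BddAbove {n | ∃ z : List α, z.length = n ∧ z.Sublist x ∧ z.Sublist y} :=
  ⟨x.length, fun _ ⟨_, hz, hx, _⟩ => hz ▸ hx.length_le⟩

lemma exists_commonSublist_length_eq_lcsLen (x y : List α) :
    ∃ z : List α, z.length = lcsLen x y ∧ z.Sublist x ∧ z.Sublist y :=
  Nat.sSup_mem (s := {n | ∃ z : List α, z.length = n ∧ z.Sublist x ∧ z.Sublist y})
    ⟨0, [], rfl, List.nil_sublist x, List.nil_sublist y⟩ (bddAbove_commonSublist_lengths x y)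

lemma length_le_lcsLen {x y z : List α} (hx : z.Sublist x) (hy : z.Sublist y) :
    z.length ≤ lcsLen x y :=
  le_csSup (bddAbove_commonSublist_lengths x y) ⟨z, rfl, hx, hy⟩

lemma lcsLen_add_lcsLen_le_lcsLen_append (x y x' y' : List α) :
    lcsLen x y + lcsLen x' y' ≤ lcsLen (x ++ x') (y ++ y') := by
  obtain ⟨z, hz, hzx, hzy⟩ := exists_commonSublist_length_eq_lcsLen x y
  obtain ⟨z', hz', hzx', hzy'⟩ := exists_commonSublist_length_eq_lcsLen x' y'
  rw [← hz, ← hz', ← List.length_append]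
  exact length_le_lcsLen (hzx.append hzx') (hzy.append hzy')

end LCS

lemma Nat.floor_add_floor_le {R : Type*} [Semiring R] [LinearOrder R] [IsStrictOrderedRing R]
    [FloorSemiring R] {x y : R} (hx : 0 ≤ x) (hy : 0 ≤ y) :
    ⌊x⌋₊ + ⌊y⌋₊ ≤ ⌊x + y⌋₊ :=
  Nat.le_floor <| by
    rw [Nat.cast_add]
    exact _root_.add_le_add (floor_le hx) (floor_le hy)

section Superadditive

variable {e : ℕ → ℕ → ℝ}

lemma le_of_superadditive_of_nonneg
    (hadd : ∀ a b a' b', e a b + e a' b' ≤ e (a + a') (b + b')) (hnonneg : ∀ a b, 0 ≤ e a b)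
    {a b a' b' : ℕ} (ha : a ≤ a') (hb : b ≤ b') :
    e a b ≤ e a' b' := by
  obtain ⟨c, rfl⟩ := Nat.exists_eq_add_of_le ha
  obtain ⟨d, rfl⟩ := Nat.exists_eq_add_of_le hb
  linarith [hadd a b c d, hnonneg c d]

theorem midpoint_concave_of_superadditive
    (hadd : ∀ a b a' b', e a b + e a' b' ≤ e (a + a') (b + b')) (hnonneg : ∀ a b, 0 ≤ e a b)
    {p q gp gq gr : ℝ} (hp : p ∈ Set.Icc (-1 : ℝ) 1) (hq : q ∈ Set.Icc (-1 : ℝ) 1)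
    (hgp : Tendsto (fun n : ℕ => e ⌊(n : ℝ) * (1 - p)⌋₊ ⌊(n : ℝ) * (1 + p)⌋₊ / n)
      atTop (nhds gp))
    (hgq : Tendsto (fun n : ℕ => e ⌊(n : ℝ) * (1 - q)⌋₊ ⌊(n : ℝ) * (1 + q)⌋₊ / n)
      atTop (nhds gq))
    (hgr : Tendsto (fun n : ℕ =>
        e ⌊(n : ℝ) * (1 - (p + q) / 2)⌋₊ ⌊(n : ℝ) * (1 + (p + q) / 2)⌋₊ / n)
      atTop (nhds gr)) :
    (gp + gq) / 2 ≤ gr := by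
  obtain ⟨hp₁, hp₂⟩ := hp
  obtain ⟨hq₁, hq₂⟩ := hq
  have hstep (n : ℕ) : e ⌊(n : ℝ) * (1 - p)⌋₊ ⌊(n : ℝ) * (1 + p)⌋₊
      + e ⌊(n : ℝ) * (1 - q)⌋₊ ⌊(n : ℝ) * (1 + q)⌋₊
      ≤ e ⌊2 * (n : ℝ) * (1 - (p + q) / 2)⌋₊
          ⌊2 * (n : ℝ) * (1 + (p + q) / 2)⌋₊ := by
    have hn : (0 : ℝ) ≤ n := n.cast_nonneg
    refine (hadd _ _ _ _).trans (le_of_superadditive_of_nonneg hadd hnonneg ?_ ?_)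
    · exact (Nat.floor_add_floor_le (by nlinarith) (by nlinarith)).trans_eq
        (congrArg Nat.floor (by ring))
    · exact (Nat.floor_add_floor_le (by nlinarith) (by nlinarith)).trans_eq
        (congrArg Nat.floor (by ring))
  have hgr₂ := hgr.comp (tendsto_id.const_mul_atTop' two_pos)
  refine le_of_tendsto_of_tendsto' ((hgp.add hgq).div_const 2) hgr₂ fun n => ?_
  simp only [Function.comp_apply, id]
  rw [← add_div, div_div, Nat.cast_mul, Nat.cast_ofNat, mul_comm (n : ℝ) 2]
  exact div_le_div_of_nonneg_right (hstep n) (by positivity)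

end Superadditive

lemma ProbabilityTheory.iIndepFun.identDistrib_comp_of_injective {Ω ι κ β : Type*}
    [MeasurableSpace Ω] [MeasurableSpace β] [Fintype κ] {μ : Measure Ω} {Z : ι → Ω → β}
    (hind : iIndepFun Z μ) (hmeas : ∀ i, Measurable (Z i))
    (hident : ∀ i j, IdentDistrib (Z i) (Z j) μ μ) {J J' : κ → ι}
    (hJ : J.Injective) (hJ' : J'.Injective) :
    IdentDistrib (fun ω t => Z (J t) ω) (fun ω t => Z (J' t) ω) μ μ where
  aemeasurable_fst := (measurable_pi_lambda _ fun t => hmeas (J t)).aemeasurable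
  aemeasurable_snd := (measurable_pi_lambda _ fun t => hmeas (J' t)).aemeasurable
  map_eq := by
    rw [(hind.precomp hJ).map_fun_eq_pi_map fun t => (hmeas _).aemeasurable,
      (hind.precomp hJ').map_fun_eq_pi_map fun t => (hmeas _).aemeasurable]
    congr 1
    funext t
    exact (hident _ _).map_eq

section WindowedLCS

/-- A pair of words of lengths `m` and `n`, encoded as one function on `Fin m ⊕ Fin n` so that
the joint law of two windows is a single pushforward measure. -/
noncomputable def lcsLenPair {α : Type*} {m n : ℕ} (v : Fin m ⊕ Fin n → α) : ℕ :=
  lcsLen (List.ofFn (v ∘ Sum.inl)) (List.ofFn (v ∘ Sum.inr))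

def windowIndex (a b m n : ℕ) : Fin m ⊕ Fin n → ℕ ⊕ ℕ :=
  Sum.map (fun i => a + i) (fun j => b + j)

lemma windowIndex_injective (a b m n : ℕ) : (windowIndex a b m n).Injective :=
  Sum.map_injective.2 ⟨fun _ _ h => Fin.ext (Nat.add_left_cancel h),
    fun _ _ h => Fin.ext (Nat.add_left_cancel h)⟩

lemma lcsLenPair_window_add_le {α : Type*} (w : ℕ ⊕ ℕ → α) (a b a' b' : ℕ) :
    lcsLenPair (fun t => w (windowIndex 0 0 a b t))
      + lcsLenPair (fun t => w (windowIndex a b a' b' t))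
      ≤ lcsLenPair (fun t => w (windowIndex 0 0 (a + a') (b + b') t)) := by
  simp only [lcsLenPair, windowIndex, Function.comp_def, Sum.map_inl, Sum.map_inr, zero_add]
  rw [List.ofFn_add, List.ofFn_add]
  exact lcsLen_add_lcsLen_le_lcsLen_append _ _ _ _

variable {Ω : Type*} [MeasurableSpace Ω] {μ : Measure Ω} {k : ℕ} {Z : ℕ ⊕ ℕ → Ω → Fin k}

lemma expLCS_eq_integral_lcsLenPair (a b : ℕ) :
    expLCS μ (fun i => Z (Sum.inl i)) (fun j => Z (Sum.inr j)) a b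
      = ∫ ω, (lcsLenPair (fun t => Z (windowIndex 0 0 a b t) ω) : ℝ) ∂μ := by
  simp only [expLCS, lcsLenPair, windowIndex, Function.comp_def, Sum.map_inl, Sum.map_inr,
    zero_add]

lemma integrable_lcsLenPair_window [IsFiniteMeasure μ] (hmeas : ∀ i, Measurable (Z i))
    (a b m n : ℕ) :
    Integrable (fun ω => (lcsLenPair (fun t => Z (windowIndex a b m n t) ω) : ℝ)) μ :=
  (Integrable.of_finite (f := fun v : Fin m ⊕ Fin n → Fin k => (lcsLenPair v : ℝ)))
    |>.comp_measurable (measurable_pi_lambda _ fun t => hmeas (windowIndex a b m n t))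

variable (hind : iIndepFun Z μ) (hmeas : ∀ i, Measurable (Z i))
  (hident : ∀ i j, IdentDistrib (Z i) (Z j) μ μ)
include hind hmeas hident

lemma integral_lcsLenPair_window_eq (a b m n : ℕ) :
    ∫ ω, (lcsLenPair (fun t => Z (windowIndex a b m n t) ω) : ℝ) ∂μ
      = ∫ ω, (lcsLenPair (fun t => Z (windowIndex 0 0 m n t) ω) : ℝ) ∂μ :=
  ((hind.identDistrib_comp_of_injective hmeas hident (windowIndex_injective a b m n)
    (windowIndex_injective 0 0 m n)).comp
      (u := fun v : Fin m ⊕ Fin n → Fin k => (lcsLenPair v : ℝ))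
      (measurable_of_countable _)).integral_eq

lemma expLCS_add_le [IsFiniteMeasure μ] (a b a' b' : ℕ) :
    expLCS μ (fun i => Z (Sum.inl i)) (fun j => Z (Sum.inr j)) a b
      + expLCS μ (fun i => Z (Sum.inl i)) (fun j => Z (Sum.inr j)) a' b'
      ≤ expLCS μ (fun i => Z (Sum.inl i)) (fun j => Z (Sum.inr j)) (a + a') (b + b') := by
  simp only [expLCS_eq_integral_lcsLenPair]
  rw [← integral_lcsLenPair_window_eq hind hmeas hident a b a' b',
    ← integral_add (integrable_lcsLenPair_window hmeas ..)
      (integrable_lcsLenPair_window hmeas ..)]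
  refine integral_mono ((integrable_lcsLenPair_window hmeas ..).add
    (integrable_lcsLenPair_window hmeas ..)) (integrable_lcsLenPair_window hmeas ..) fun ω => ?_
  exact_mod_cast lcsLenPair_window_add_le (fun i => Z i ω) a b a' b'

end WindowedLCS

theorem meanLCS_concave_general {Ω : Type*} [MeasurableSpace Ω] (μ : Measure Ω)
    [IsProbabilityMeasure μ] (k : ℕ)
    (Z : ℕ ⊕ ℕ → Ω → Fin k) (hmeas : ∀ i, Measurable (Z i))
    (hindep : iIndepFun Z μ)
    (hunif : ∀ i c, μ {ω | Z i ω = c} = (k : ENNReal)⁻¹)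
    (g : ℝ → ℝ)
    (hg : ∀ p ∈ Set.Ioo (-1 : ℝ) 1,
      Tendsto (fun n : ℕ =>
          expLCS μ (fun i => Z (Sum.inl i)) (fun j => Z (Sum.inr j))
            ⌊(n : ℝ) * (1 - p)⌋₊ ⌊(n : ℝ) * (1 + p)⌋₊ / n)
        atTop (nhds (g p))) :
    ∀ p ∈ Set.Ioo (-1 : ℝ) 1, ∀ q ∈ Set.Ioo (-1 : ℝ) 1,
      (g p + g q) / 2 ≤ g ((p + q) / 2) := by
  intro p hp q hq
  have hident (i j : ℕ ⊕ ℕ) : IdentDistrib (Z i) (Z j) μ μ :=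
    ⟨(hmeas i).aemeasurable, (hmeas j).aemeasurable, Measure.ext_of_singleton fun c => by
      rw [Measure.map_apply (hmeas i) (measurableSet_singleton c),
        Measure.map_apply (hmeas j) (measurableSet_singleton c)]
      exact (hunif i c).trans (hunif j c).symm⟩
  have hmid : (p + q) / 2 ∈ Set.Ioo (-1 : ℝ) 1 :=
    ⟨by linarith [hp.1, hq.1], by linarith [hp.2, hq.2]⟩
  exact midpoint_concave_of_superadditive (expLCS_add_le hindep hmeas hident)
    (fun a b => integral_nonneg fun ω => Nat.cast_nonneg _)
    (Set.Ioo_subset_Icc_self hp) (Set.Ioo_subset_Icc_self hq) (hg p hp) (hg q hq) (hg _ hmid)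

/-- The mean LCS function `γ_k` is midpoint concave on `(-1,1)`. -/
theorem meanLCS_concave {Ω : Type*} [MeasurableSpace Ω] (μ : Measure Ω)
    [IsProbabilityMeasure μ] (k : ℕ) (hk : 0 < k)
    (Z : ℕ ⊕ ℕ → Ω → Fin k) (hmeas : ∀ i, Measurable (Z i))
    (hindep : iIndepFun Z μ)
    (hunif : ∀ i c, μ {ω | Z i ω = c} = (k : ENNReal)⁻¹)
    (g : ℝ → ℝ)
    (hg : ∀ p ∈ Set.Ioo (-1 : ℝ) 1,
      Tendsto (fun n : ℕ =>
          expLCS μ (fun i => Z (Sum.inl i)) (fun j => Z (Sum.inr j))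
            ⌊(n : ℝ) * (1 - p)⌋₊ ⌊(n : ℝ) * (1 + p)⌋₊ / n)
        atTop (nhds (g p))) :
    ∀ p ∈ Set.Ioo (-1 : ℝ) 1, ∀ q ∈ Set.Ioo (-1 : ℝ) 1,
      (g p + g q) / 2 ≤ g ((p + q) / 2) :=
  meanLCS_concave_general μ k Z hmeas hindep hunif g hg
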